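/- The partial function W on the cells of UD^nΓ is injective: if c and c' are redundant cells with W(c) = W(c'), then c = c'. -/
import Mathlib


open SimpleGraph

attribute [local instance] Classical.propDecidable

namespace GraphBraid

/-- The degree of a vertex, defined via `Set.ncard` to avoid decidability assumptions. -/
noncomputable def ncdeg {V : Type} (H : SimpleGraph V) (v : V) : ℕ := (H.neighborSet v).ncard

/-- The basic setup: a finite connected simple graph `G` with a spanning tree `T`,
a root `root` of degree one in `T`, and a labelling of the edges of `T` incident to each
vertex `u` by the numbers `0, …, d_T(u) - 1`, where the edge towards the root receives the
label `0` (and the unique edge at the root receives the label `1`). -/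
structure Setup (V : Type) [Fintype V] [DecidableEq V] where
  G : SimpleGraph V
  G_conn : G.Connected
  T : SimpleGraph V
  T_le : T ≤ G
  T_tree : T.IsTree
  root : V
  root_deg : ncdeg T root = 1
  label : V → V → ℕ
  label_bij : ∀ u : V, u ≠ root → Set.BijOn (label u) (T.neighborSet u) (Set.Iio (ncdeg T u))
  label_zero : ∀ u : V, u ≠ root → ∀ w : V, T.Adj u w →
    (label u w = 0 ↔ T.dist root w + 1 = T.dist root u)
  label_root : ∀ w : V, T.Adj root w → label root w = 1


namespace Setup

variable {V : Type} [Fintype V] [DecidableEq V] (S : Setup V)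

/-- The unique geodesic (path) in the tree `T` from `u` to `w`. -/
noncomputable def geod (u w : V) : S.T.Walk u w := (S.T_tree.existsUnique_path u w).choose

/-- `g(u,w)`: the label at `u` of the first edge of the tree geodesic from `u` to `w`,
with `g(u,u) = 0`. -/
noncomputable def gfun (u w : V) : ℕ :=
  if u = w then 0 else S.label u ((S.geod u w).getVert 1)

lemma exists_wedge (u w : V) :
    ∃ x : V, (x ∈ (S.geod S.root u).support ∧ x ∈ (S.geod S.root w).support) ∧
      ∀ y : V, y ∈ (S.geod S.root u).support → y ∈ (S.geod S.root w).support →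
        S.T.dist S.root y ≤ S.T.dist S.root x := by
  classical
  have hne : ((S.geod S.root u).support.toFinset ∩
      (S.geod S.root w).support.toFinset).Nonempty :=
    ⟨S.root, by simp [SimpleGraph.Walk.start_mem_support]⟩
  obtain ⟨x, hx, hmax⟩ := Finset.exists_max_image _ (fun y => S.T.dist S.root y) hne
  simp only [Finset.mem_inter, List.mem_toFinset] at hx hmax
  exact ⟨x, ⟨hx.1, hx.2⟩, fun y h1 h2 => hmax y ⟨h1, h2⟩⟩

/-- `u ∧ w`: the vertex farthest from the root lying on both tree geodesics from the
root to `u` and from the root to `w`. -/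
noncomputable def wedge (u w : V) : V := (S.exists_wedge u w).choose

/-- The order on vertices: `u ≤ w` iff `u ∧ w = u`, or `u ∧ w ≠ u` and
`g(u ∧ w, u) < g(u ∧ w, w)`. -/
def vle (u w : V) : Prop :=
  S.wedge u w = u ∨ (S.wedge u w ≠ u ∧ S.gfun (S.wedge u w) u < S.gfun (S.wedge u w) w)

/-- The associated strict order on vertices. -/
def vlt (u w : V) : Prop := S.vle u w ∧ u ≠ w

/-- `ι(e)`: the larger endpoint of the edge `e` in the vertex order. -/
noncomputable def iota (e : Sym2 V) : V :=
  if S.vle (Quot.out e).1 (Quot.out e).2 then (Quot.out e).2 else (Quot.out e).1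

/-- `τ(e)`: the smaller endpoint of the edge `e` in the vertex order. -/
noncomputable def tau (e : Sym2 V) : V :=
  if S.vle (Quot.out e).1 (Quot.out e).2 then (Quot.out e).1 else (Quot.out e).2

/-- `e(v)`: the edge of `T` incident to `v` lying on the tree geodesic from `v` to the root. -/
noncomputable def eV (v : V) : Sym2 V := s(v, (S.geod v S.root).getVert 1)

/-- A cell of `UD^n Γ`: an `n`-element set whose elements are vertices (encoded as
diagonal elements of `Sym2 V`) and closed edges of `G`, no two distinct elements of which
share a vertex. -/
def IsCell (n : ℕ) (c : Finset (Sym2 V)) : Prop :=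
  c.card = n ∧ (∀ s ∈ c, s.IsDiag ∨ s ∈ S.G.edgeSet) ∧
    ∀ s ∈ c, ∀ t ∈ c, s ≠ t → ∀ x : V, x ∈ s → x ∉ t

/-- The dimension of a cell: the number of edges it contains. -/
noncomputable def dim (c : Finset (Sym2 V)) : ℕ := (c.filter (fun s => ¬ s.IsDiag)).card

/-- A vertex `v` is blocked in `c` if `v` is the root, or `e(v)` shares a vertex with some
element of `c` other than `v`. -/
def Blocked (c : Finset (Sym2 V)) (v : V) : Prop :=
  v = S.root ∨ ∃ s ∈ c, s ≠ Sym2.diag v ∧ ∃ x : V, x ∈ S.eV v ∧ x ∈ s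

/-- A vertex `v` is unblocked in `c` if it belongs to `c` and is not blocked. -/
def Unblocked (c : Finset (Sym2 V)) (v : V) : Prop := Sym2.diag v ∈ c ∧ ¬ S.Blocked c v

/-- The elementary reduction of `c` from the vertex `v`: replace `v` by the edge `e(v)`. -/
noncomputable def redFrom (c : Finset (Sym2 V)) (v : V) : Finset (Sym2 V) :=
  insert (S.eV v) (c.erase (Sym2.diag v))

/-- `c'` is the principal elementary reduction of `c`: it is the elementary reduction of `c`
from the smallest unblocked vertex of `c`. -/
def PrincipalRedOf (c c' : Finset (Sym2 V)) : Prop :=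
  ∃ v : V, S.Unblocked c v ∧ (∀ u : V, S.Unblocked c u → S.vle v u) ∧ c' = S.redFrom c v

/-- Auxiliary definition of redundancy, by induction on the dimension: a cell of
dimension `i` is redundant iff it has an unblocked vertex and it is not the principal
elementary reduction of a redundant cell of dimension `i - 1`. -/
def RedundantAux (n : ℕ) : ℕ → Finset (Sym2 V) → Prop
  | 0, c => ∃ v, S.Unblocked c v
  | (i + 1), c => (∃ v, S.Unblocked c v) ∧
      ¬ ∃ c₀, S.IsCell n c₀ ∧ dim c₀ = i ∧ RedundantAux n i c₀ ∧ S.PrincipalRedOf c₀ c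

/-- A cell is redundant if the discrete vector field `W` is defined on it. -/
def Redundant (n : ℕ) (c : Finset (Sym2 V)) : Prop := S.RedundantAux n (dim c) c

/-- A cell is collapsible if it lies in the image of `W`. -/
def Collapsible (n : ℕ) (c : Finset (Sym2 V)) : Prop :=
  ∃ c₀, S.IsCell n c₀ ∧ S.Redundant n c₀ ∧ S.PrincipalRedOf c₀ c

/-- A cell is critical if it is neither redundant nor collapsible. -/
def Critical (n : ℕ) (c : Finset (Sym2 V)) : Prop :=
  ¬ S.Redundant n c ∧ ¬ S.Collapsible n c

/-- An edge `e` of the cell `c` is order-respecting in `c` if `e` lies in `T` and every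
vertex `v ∈ c` such that `e(v)` and `e` share the vertex `τ(e)` satisfies `v > ι(e)`. -/
def OrderResp (c : Finset (Sym2 V)) (e : Sym2 V) : Prop :=
  e ∈ c ∧ e ∈ S.T.edgeSet ∧
    ∀ v : V, v ≠ S.root → Sym2.diag v ∈ c → S.tau e ∈ S.eV v → S.vlt (S.iota e) v

/-- `e` is the minimal order-respecting edge of `c`. -/
def MinOrderResp (c : Finset (Sym2 V)) (e : Sym2 V) : Prop :=
  S.OrderResp c e ∧ ∀ e' : Sym2 V, S.OrderResp c e' → S.vle (S.iota e) (S.iota e')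

/-- `c'` is a face of `c` obtained by replacing one edge of `c` by one of its endpoints. -/
def IsFace (c' c : Finset (Sym2 V)) : Prop :=
  ∃ (e : Sym2 V) (x : V), e ∈ c ∧ ¬ e.IsDiag ∧ x ∈ e ∧ c' = insert (Sym2.diag x) (c.erase e)

/-- `Γ` is sufficiently subdivided for `n`: every path between distinct vertices of degree
`≠ 2` passes through at least `n - 1` edges, and every cycle has length at least `n + 1`. -/
def SuffSubdiv (n : ℕ) : Prop :=
  (∀ u v : V, u ≠ v → ncdeg S.G u ≠ 2 → ncdeg S.G v ≠ 2 →
    ∀ p : S.G.Walk u v, p.IsPath → n - 1 ≤ p.length) ∧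
  (∀ v : V, ∀ p : S.G.Walk v v, p.IsCycle → n + 1 ≤ p.length)

end Setup

namespace Setup

variable {V : Type} [Fintype V] [DecidableEq V] (S : Setup V)

-- ============ new aux material ============

lemma geod_isPath (u w : V) : (S.geod u w).IsPath :=
  (S.T_tree.existsUnique_path u w).choose_spec.1

lemma geod_unique {u w : V} (p : S.T.Walk u w) (hp : p.IsPath) : p = S.geod u w :=
  (S.T_tree.existsUnique_path u w).choose_spec.2 p hp

lemma T_conn : S.T.Connected := S.T_tree.isConnected

lemma geod_length (u w : V) : (S.geod u w).length = S.T.dist u w := by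
  obtain ⟨q, hq⟩ := (S.T_conn).exists_walk_length_eq_dist u w
  have hb : q.bypass = S.geod u w := S.geod_unique _ q.bypass_isPath
  have h1 : (S.geod u w).length ≤ S.T.dist u w := by
    rw [← hq, ← hb]; exact q.length_bypass_le
  exact le_antisymm h1 (SimpleGraph.dist_le _)

lemma dist_getVert_le {u w : V} (q : S.T.Walk u w) (k : ℕ) :
    S.T.dist u (q.getVert k) ≤ k := by
  induction q generalizing k with
  | nil => simp [SimpleGraph.Walk.getVert, SimpleGraph.dist_self]
  | @cons a b c h p ih =>
    cases k with
    | zero => simp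
    | succ k =>
      have h1 : S.T.dist a (p.getVert k) ≤ S.T.dist a b + S.T.dist b (p.getVert k) :=
        S.T_conn.dist_triangle
      have h2 : S.T.dist a b ≤ 1 := by
        simpa using SimpleGraph.dist_le (SimpleGraph.Walk.cons h SimpleGraph.Walk.nil)
      have h3 := ih k
      have : ((SimpleGraph.Walk.cons h p).getVert (k+1)) = p.getVert k :=
        SimpleGraph.Walk.getVert_cons_succ p h
      rw [this]
      omega

lemma dist_getVert_to_end {u w : V} (q : S.T.Walk u w) {k : ℕ} (hk : k ≤ q.length) :
    S.T.dist (q.getVert k) w ≤ q.length - k := by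
  have h := S.dist_getVert_le q.reverse (q.length - k)
  rw [SimpleGraph.Walk.getVert_reverse] at h
  have h2 : q.length - (q.length - k) = k := by omega
  rw [h2] at h
  rw [SimpleGraph.dist_comm]
  exact h

lemma dist_getVert_geod {u : V} {k : ℕ} (hk : k ≤ (S.geod S.root u).length) :
    S.T.dist S.root ((S.geod S.root u).getVert k) = k := by
  have h1 := S.dist_getVert_le (S.geod S.root u) k
  have h2 := S.dist_getVert_to_end (S.geod S.root u) hk
  have h3 : S.T.dist S.root u ≤ S.T.dist S.root ((S.geod S.root u).getVert k) +
      S.T.dist ((S.geod S.root u).getVert k) u := S.T_conn.dist_triangle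
  have h4 : (S.geod S.root u).length = S.T.dist S.root u := S.geod_length _ _
  omega

lemma getVert_dist_of_mem {u x : V} (hx : x ∈ (S.geod S.root u).support) :
    S.T.dist S.root x ≤ (S.geod S.root u).length ∧
      (S.geod S.root u).getVert (S.T.dist S.root x) = x := by
  obtain ⟨i, hix, hi⟩ := (SimpleGraph.Walk.mem_support_iff_exists_getVert).1 hx
  have hd := S.dist_getVert_geod (u := u) hi
  rw [hix] at hd
  rw [hd]
  exact ⟨hi, hix⟩

lemma dist_le_of_mem {u x : V} (hx : x ∈ (S.geod S.root u).support) :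
    S.T.dist S.root x ≤ S.T.dist S.root u := by
  have := (S.getVert_dist_of_mem hx).1
  rwa [S.geod_length] at this

lemma eq_of_dist_eq {u x y : V} (hx : x ∈ (S.geod S.root u).support)
    (hy : y ∈ (S.geod S.root u).support)
    (h : S.T.dist S.root x = S.T.dist S.root y) : x = y := by
  have h1 := (S.getVert_dist_of_mem hx).2
  have h2 := (S.getVert_dist_of_mem hy).2
  rw [← h1, ← h2, h]

lemma dist_lt_of_mem_ne {u x : V} (hx : x ∈ (S.geod S.root u).support) (hne : x ≠ u) :
    S.T.dist S.root x < S.T.dist S.root u := by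
  have h1 := S.dist_le_of_mem hx
  rcases lt_or_eq_of_le h1 with h | h
  · exact h
  · exact absurd (S.eq_of_dist_eq hx (SimpleGraph.Walk.end_mem_support _) h) hne

lemma support_subset {u x : V} (hx : x ∈ (S.geod S.root u).support) :
    (S.geod S.root x).support ⊆ (S.geod S.root u).support := by
  have h : (S.geod S.root u).takeUntil x hx = S.geod S.root x :=
    S.geod_unique _ ((S.geod_isPath _ _).takeUntil hx)
  rw [← h]
  exact SimpleGraph.Walk.support_takeUntil_subset _ hx

lemma geod_prefix {u x : V} (hx : x ∈ (S.geod S.root u).support) {k : ℕ}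
    (hk : k ≤ S.T.dist S.root x) :
    (S.geod S.root x).getVert k = (S.geod S.root u).getVert k := by
  have hlen : k ≤ (S.geod S.root x).length := by rw [S.geod_length]; exact hk
  have hmem : (S.geod S.root x).getVert k ∈ (S.geod S.root u).support :=
    S.support_subset hx (SimpleGraph.Walk.mem_support_iff_exists_getVert.2 ⟨k, rfl, hlen⟩)
  have hd1 : S.T.dist S.root ((S.geod S.root x).getVert k) = k := S.dist_getVert_geod hlen
  have hlen2 : k ≤ (S.geod S.root u).length := by
    rw [S.geod_length]
    exact le_trans hk (S.dist_le_of_mem hx)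
  have hmem2 : (S.geod S.root u).getVert k ∈ (S.geod S.root u).support :=
    SimpleGraph.Walk.mem_support_iff_exists_getVert.2 ⟨k, rfl, hlen2⟩
  have hd2 : S.T.dist S.root ((S.geod S.root u).getVert k) = k := S.dist_getVert_geod hlen2
  exact S.eq_of_dist_eq hmem hmem2 (by rw [hd1, hd2])

lemma mem_support_of_dist_le {u x y : V} (hx : x ∈ (S.geod S.root u).support)
    (hy : y ∈ (S.geod S.root u).support)
    (hxy : S.T.dist S.root x ≤ S.T.dist S.root y) : x ∈ (S.geod S.root y).support := by
  have h1 := (S.getVert_dist_of_mem hx).2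
  have h2 : (S.geod S.root y).getVert (S.T.dist S.root x) =
      (S.geod S.root u).getVert (S.T.dist S.root x) := S.geod_prefix hy hxy
  have hlen : S.T.dist S.root x ≤ (S.geod S.root y).length := by
    rw [S.geod_length]; exact hxy
  rw [← h1, ← h2]
  exact SimpleGraph.Walk.mem_support_iff_exists_getVert.2 ⟨_, rfl, hlen⟩

lemma geod_getVert_one {t x : V} (hx : x ∈ (S.geod S.root t).support) (hxt : x ≠ t) :
    (S.geod x t).getVert 1 = (S.geod S.root t).getVert (S.T.dist S.root x + 1) := by
  have hdrop : (S.geod S.root t).dropUntil x hx = S.geod x t :=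
    S.geod_unique _ ((S.geod_isPath _ _).dropUntil hx)
  have htake : (S.geod S.root t).takeUntil x hx = S.geod S.root x :=
    S.geod_unique _ ((S.geod_isPath _ _).takeUntil hx)
  have hlen : ((S.geod S.root t).takeUntil x hx).length = S.T.dist S.root x := by
    rw [htake, S.geod_length]
  have hspec := (S.geod S.root t).take_spec hx
  conv_rhs => rw [← hspec]
  rw [SimpleGraph.Walk.getVert_append, hlen]
  rw [if_neg (by omega)]
  congr 1
  · exact hdrop.symm
  · omega

lemma gfun_self (u : V) : S.gfun u u = 0 := by simp [Setup.gfun]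

lemma gfun_eq {t x : V} (hx : x ∈ (S.geod S.root t).support) (hxt : x ≠ t) :
    S.gfun x t = S.label x ((S.geod S.root t).getVert (S.T.dist S.root x + 1)) := by
  rw [Setup.gfun, if_neg hxt, S.geod_getVert_one hx hxt]

lemma gfun_agree {b y t : V} (hby : b ∈ (S.geod S.root y).support)
    (hyt : y ∈ (S.geod S.root t).support) (h1 : b ≠ y) (h2 : b ≠ t) :
    S.gfun b y = S.gfun b t := by
  have hbt : b ∈ (S.geod S.root t).support := S.support_subset hyt hby
  rw [S.gfun_eq hby h1, S.gfun_eq hbt h2]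
  congr 1
  have hlt : S.T.dist S.root b < S.T.dist S.root y := S.dist_lt_of_mem_ne hby h1
  exact S.geod_prefix hyt (Nat.succ_le_of_lt hlt)

lemma geod_adj_one {x t : V} (h : x ≠ t) : S.T.Adj x ((S.geod x t).getVert 1) := by
  have hlen : 0 < (S.geod x t).length := by
    rcases Nat.eq_zero_or_pos (S.geod x t).length with h0 | h0
    · exact absurd (SimpleGraph.Walk.eq_of_length_eq_zero h0) h
    · exact h0
  have := (S.geod x t).adj_getVert_succ hlen
  rwa [SimpleGraph.Walk.getVert_zero] at this

lemma wedge_mem_left (u w : V) : S.wedge u w ∈ (S.geod S.root u).support :=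
  (S.exists_wedge u w).choose_spec.1.1

lemma wedge_mem_right (u w : V) : S.wedge u w ∈ (S.geod S.root w).support :=
  (S.exists_wedge u w).choose_spec.1.2

lemma wedge_max (u w : V) : ∀ y : V, y ∈ (S.geod S.root u).support →
    y ∈ (S.geod S.root w).support → S.T.dist S.root y ≤ S.T.dist S.root (S.wedge u w) :=
  (S.exists_wedge u w).choose_spec.2

lemma wedge_eq {u w z : V} (hzu : z ∈ (S.geod S.root u).support)
    (hzw : z ∈ (S.geod S.root w).support)
    (hmax : ∀ y : V, y ∈ (S.geod S.root u).support → y ∈ (S.geod S.root w).support →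
      S.T.dist S.root y ≤ S.T.dist S.root z) : S.wedge u w = z := by
  have h1 := S.wedge_max u w z hzu hzw
  have h2 := hmax _ (S.wedge_mem_left u w) (S.wedge_mem_right u w)
  exact S.eq_of_dist_eq (S.wedge_mem_left u w) hzu (le_antisymm h2 h1)

lemma wedge_self (u : V) : S.wedge u u = u :=
  S.wedge_eq (SimpleGraph.Walk.end_mem_support _) (SimpleGraph.Walk.end_mem_support _)
    (fun y hy _ => S.dist_le_of_mem hy)

lemma wedge_eq_left {u w : V} (h : u ∈ (S.geod S.root w).support) : S.wedge u w = u :=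
  S.wedge_eq (SimpleGraph.Walk.end_mem_support _) h (fun y hy _ => S.dist_le_of_mem hy)

lemma wedge_eq_right {u w : V} (h : w ∈ (S.geod S.root u).support) : S.wedge u w = w :=
  S.wedge_eq h (SimpleGraph.Walk.end_mem_support _) (fun y _ hy => S.dist_le_of_mem hy)

lemma wedge_comm (u w : V) : S.wedge u w = S.wedge w u :=
  S.wedge_eq (S.wedge_mem_right w u) (S.wedge_mem_left w u)
    (fun y hy hy' => S.wedge_max w u y hy' hy)

lemma gfun_ne {u w : V} (hzu : S.wedge u w ≠ u) (hzw : S.wedge u w ≠ w) :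
    S.gfun (S.wedge u w) u ≠ S.gfun (S.wedge u w) w := by
  set z := S.wedge u w with hz
  have hmu : z ∈ (S.geod S.root u).support := S.wedge_mem_left u w
  have hmw : z ∈ (S.geod S.root w).support := S.wedge_mem_right u w
  have hdu : S.T.dist S.root z < S.T.dist S.root u := S.dist_lt_of_mem_ne hmu hzu
  have hdw : S.T.dist S.root z < S.T.dist S.root w := S.dist_lt_of_mem_ne hmw hzw
  set y1 := (S.geod S.root u).getVert (S.T.dist S.root z + 1) with hy1
  set y2 := (S.geod S.root w).getVert (S.T.dist S.root z + 1) with hy2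
  have hlen1 : S.T.dist S.root z + 1 ≤ (S.geod S.root u).length := by
    rw [S.geod_length]; omega
  have hlen2 : S.T.dist S.root z + 1 ≤ (S.geod S.root w).length := by
    rw [S.geod_length]; omega
  have hm1 : y1 ∈ (S.geod S.root u).support :=
    SimpleGraph.Walk.mem_support_iff_exists_getVert.2 ⟨_, rfl, hlen1⟩
  have hm2 : y2 ∈ (S.geod S.root w).support :=
    SimpleGraph.Walk.mem_support_iff_exists_getVert.2 ⟨_, rfl, hlen2⟩
  have hdy1 : S.T.dist S.root y1 = S.T.dist S.root z + 1 := S.dist_getVert_geod hlen1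
  have hdy2 : S.T.dist S.root y2 = S.T.dist S.root z + 1 := S.dist_getVert_geod hlen2
  have hne : y1 ≠ y2 := by
    intro h
    have := S.wedge_max u w y1 hm1 (h ▸ hm2)
    rw [hdy1, ← hz] at this
    omega
  have ha1 : S.T.Adj z y1 := by
    have := S.geod_adj_one hzu
    rwa [S.geod_getVert_one hmu hzu] at this
  have ha2 : S.T.Adj z y2 := by
    have := S.geod_adj_one hzw
    rwa [S.geod_getVert_one hmw hzw] at this
  rw [S.gfun_eq hmu hzu, S.gfun_eq hmw hzw, ← hy1, ← hy2]
  by_cases hroot : z = S.root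
  · exfalso
    obtain ⟨a, ha⟩ := Set.ncard_eq_one.mp S.root_deg
    have e1 : y1 ∈ S.T.neighborSet S.root := by rw [← hroot]; exact ha1
    have e2 : y2 ∈ S.T.neighborSet S.root := by rw [← hroot]; exact ha2
    rw [ha] at e1 e2
    exact hne (e1.trans e2.symm)
  · intro h
    exact hne ((S.label_bij z hroot).injOn ha1 ha2 h)

lemma vle_refl (u : V) : S.vle u u := Or.inl (S.wedge_self u)

lemma vle_total (u w : V) : S.vle u w ∨ S.vle w u := by
  by_cases h1 : S.wedge u w = u
  · exact Or.inl (Or.inl h1)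
  by_cases h2 : S.wedge u w = w
  · refine Or.inr (Or.inl ?_)
    rw [← S.wedge_comm u w]; exact h2
  rcases Nat.lt_or_ge (S.gfun (S.wedge u w) u) (S.gfun (S.wedge u w) w) with h | h
  · exact Or.inl (Or.inr ⟨h1, h⟩)
  · have hne := S.gfun_ne h1 h2
    refine Or.inr (Or.inr ?_)
    rw [← S.wedge_comm u w]
    exact ⟨h2, lt_of_le_of_ne h (fun hh => hne (hh.symm))⟩

lemma vle_antisymm {u w : V} (h1 : S.vle u w) (h2 : S.vle w u) : u = w := by
  have hcomm := S.wedge_comm w u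
  rcases h1 with h1 | ⟨h1a, h1b⟩ <;> rcases h2 with h2 | ⟨h2a, h2b⟩
  · rw [← h1, S.wedge_comm u w, h2]
  · rw [hcomm, h1] at h2b
    rw [S.gfun_self] at h2b
    omega
  · rw [hcomm] at h2
    rw [h2, S.gfun_self] at h1b
    omega
  · rw [hcomm] at h2b
    omega

lemma vle_trans {u w x : V} (h1 : S.vle u w) (h2 : S.vle w x) : S.vle u x := by
  by_cases huw : u = w
  · subst huw; exact h2
  by_cases hwx : w = x
  · subst hwx; exact h1
  by_cases hux : u = x
  · subst hux; exact S.vle_refl u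
  rcases h1 with h1 | ⟨h1ne, h1lt⟩
  · -- u ∈ P w
    have hu_mem : u ∈ (S.geod S.root w).support := by
      rw [← h1]; exact S.wedge_mem_right u w
    rcases h2 with h2 | ⟨h2ne, h2lt⟩
    · have hw_mem : w ∈ (S.geod S.root x).support := by
        rw [← h2]; exact S.wedge_mem_right w x
      exact Or.inl (S.wedge_eq_left (S.support_subset hw_mem hu_mem))
    · set b := S.wedge w x with hb
      have hbw : b ∈ (S.geod S.root w).support := S.wedge_mem_left w x
      have hbx : b ∈ (S.geod S.root x).support := S.wedge_mem_right w x
      rcases le_or_gt (S.T.dist S.root u) (S.T.dist S.root b) with hle | hlt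
      · have hub : u ∈ (S.geod S.root b).support := S.mem_support_of_dist_le hu_mem hbw hle
        exact Or.inl (S.wedge_eq_left (S.support_subset hbx hub))
      · have hbu : b ∈ (S.geod S.root u).support := S.mem_support_of_dist_le hbw hu_mem hlt.le
        have hwux : S.wedge u x = b := S.wedge_eq hbu hbx (fun y hyu hyx =>
          S.wedge_max w x y (S.support_subset hu_mem hyu) hyx)
        have hbnu : b ≠ u := fun h => by rw [h] at hlt; omega
        have hagr : S.gfun b u = S.gfun b w := S.gfun_agree hbu hu_mem hbnu h2ne
        refine Or.inr ⟨by rw [hwux]; exact hbnu, ?_⟩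
        rw [hwux, hagr]
        exact h2lt
  · set a := S.wedge u w with ha
    have hau : a ∈ (S.geod S.root u).support := S.wedge_mem_left u w
    have haw : a ∈ (S.geod S.root w).support := S.wedge_mem_right u w
    have hw_notin : w ∉ (S.geod S.root u).support := by
      intro hw
      have : S.wedge u w = w := S.wedge_eq_right hw
      rw [← ha] at this
      rw [this, S.gfun_self] at h1lt
      omega
    have hanw : a ≠ w := fun h => hw_notin (h ▸ hau)
    rcases h2 with h2 | ⟨h2ne, h2lt⟩
    · have hw_mem : w ∈ (S.geod S.root x).support := by
        rw [← h2]; exact S.wedge_mem_right w x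
      have hax : a ∈ (S.geod S.root x).support := S.support_subset hw_mem haw
      have hwux : S.wedge u x = a := by
        refine S.wedge_eq hau hax (fun y hyu hyx => ?_)
        rcases le_or_gt (S.T.dist S.root y) (S.T.dist S.root w) with hle | hlt
        · exact S.wedge_max u w y hyu (S.mem_support_of_dist_le hyx hw_mem hle)
        · exact absurd (S.support_subset hyu (S.mem_support_of_dist_le hw_mem hyx hlt.le))
            hw_notin
      have hanx : a ≠ x := by
        intro h
        have hxw : x ∈ (S.geod S.root w).support := h ▸ haw
        have hwxx : S.wedge w x = x := S.wedge_eq_right hxw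
        exact hwx (h2.symm.trans hwxx)
      have hagr : S.gfun a w = S.gfun a x := S.gfun_agree haw hw_mem hanw hanx
      refine Or.inr ⟨by rw [hwux]; exact h1ne, ?_⟩
      rw [hwux, ← hagr]
      exact h1lt
    · set b := S.wedge w x with hb
      have hbw : b ∈ (S.geod S.root w).support := S.wedge_mem_left w x
      have hbx : b ∈ (S.geod S.root x).support := S.wedge_mem_right w x
      rcases lt_trichotomy (S.T.dist S.root a) (S.T.dist S.root b) with hlt | heq | hgt
      · -- d a < d b
        have hab : a ∈ (S.geod S.root b).support := S.mem_support_of_dist_le haw hbw hlt.le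
        have hax : a ∈ (S.geod S.root x).support := S.support_subset hbx hab
        have hanb : a ≠ b := fun h => by rw [h] at hlt; omega
        have hwux : S.wedge u x = a := by
          refine S.wedge_eq hau hax (fun y hyu hyx => ?_)
          rcases le_or_gt (S.T.dist S.root y) (S.T.dist S.root b) with hle | hlt'
          · exact S.wedge_max u w y hyu
              (S.support_subset hbw (S.mem_support_of_dist_le hyx hbx hle))
          · have hby : b ∈ (S.geod S.root y).support :=
              S.mem_support_of_dist_le hbx hyx hlt'.le
            have : b ∈ (S.geod S.root u).support := S.support_subset hyu hby
            have hle2 := S.wedge_max u w b this hbw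
            rw [← ha] at hle2
            omega
        have hanx : a ≠ x := by
          intro h
          have hxb : x ∈ (S.geod S.root b).support := h ▸ hab
          have hdxb := S.dist_le_of_mem hxb
          have hdbx := S.dist_le_of_mem hbx
          have : b = x := S.eq_of_dist_eq hbx (SimpleGraph.Walk.end_mem_support _)
            (le_antisymm hdbx hdxb)
          exact hanb (h.trans this.symm)
        have hg1 : S.gfun a b = S.gfun a w := S.gfun_agree hab hbw hanb hanw
        have hg2 : S.gfun a b = S.gfun a x := S.gfun_agree hab hbx hanb hanx
        refine Or.inr ⟨by rw [hwux]; exact h1ne, ?_⟩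
        rw [hwux, ← hg2, hg1]
        exact h1lt
      · -- d a = d b, so a = b
        have hab : a = b := S.eq_of_dist_eq haw hbw heq
        have hanx : a ≠ x := by
          intro h
          rw [← hab, h, S.gfun_self] at h2lt
          omega
        have hax : a ∈ (S.geod S.root x).support := hab ▸ hbx
        have hwux : S.wedge u x = a := by
          refine S.wedge_eq hau hax (fun y hyu hyx => ?_)
          by_contra hcon
          push_neg at hcon
          have hay : a ∈ (S.geod S.root y).support :=
            S.mem_support_of_dist_le hau hyu hcon.le
          have hany : a ≠ y := fun h => by rw [h] at hcon; omega
          have hg1 : S.gfun a y = S.gfun a u := S.gfun_agree hay hyu hany h1ne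
          have hg2 : S.gfun a y = S.gfun a x := S.gfun_agree hay hyx hany hanx
          rw [hg1] at hg2
          rw [← hab] at h2lt
          have hgw : S.gfun a u < S.gfun a w := h1lt
          omega
        refine Or.inr ⟨by rw [hwux]; exact h1ne, ?_⟩
        rw [hwux]
        rw [← hab] at h2lt
        omega
      · -- d b < d a
        have hba : b ∈ (S.geod S.root a).support := S.mem_support_of_dist_le hbw haw hgt.le
        have hbu : b ∈ (S.geod S.root u).support := S.support_subset hau hba
        have hdau : S.T.dist S.root a ≤ S.T.dist S.root u := S.dist_le_of_mem hau
        have hbnu : b ≠ u := fun h => by rw [h] at hgt; omega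
        have hbna : b ≠ a := fun h => by rw [h] at hgt; omega
        have hwux : S.wedge u x = b := by
          refine S.wedge_eq hbu hbx (fun y hyu hyx => ?_)
          by_contra hcon
          push_neg at hcon
          by_cases hyw : y ∈ (S.geod S.root w).support
          · have hle2 := S.wedge_max w x y hyw hyx
            rw [← hb] at hle2
            omega
          · rcases le_or_gt (S.T.dist S.root y) (S.T.dist S.root a) with hle | hlt'
            · exact hyw (S.support_subset haw (S.mem_support_of_dist_le hyu hau hle))
            · have hay : a ∈ (S.geod S.root y).support :=
                S.mem_support_of_dist_le hau hyu hlt'.le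
              have hax : a ∈ (S.geod S.root x).support := S.support_subset hyx hay
              have hle2 := S.wedge_max w x a haw hax
              rw [← hb] at hle2
              omega
        have hg1 : S.gfun b a = S.gfun b u := S.gfun_agree hba hau hbna hbnu
        have hg2 : S.gfun b a = S.gfun b w := S.gfun_agree hba haw hbna h2ne
        refine Or.inr ⟨by rw [hwux]; exact hbnu, ?_⟩
        rw [hwux, ← hg1, hg2]
        exact h2lt

lemma geod_to_root (v : V) : S.geod v S.root = (S.geod S.root v).reverse :=
  (S.geod_unique _ ((S.geod_isPath S.root v).reverse)).symm

lemma root_geod_length_pos {v : V} (hv : v ≠ S.root) : 1 ≤ (S.geod S.root v).length := by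
  rcases Nat.eq_zero_or_pos (S.geod S.root v).length with h0 | h0
  · exact absurd (SimpleGraph.Walk.eq_of_length_eq_zero h0).symm hv
  · exact h0

lemma parent_dist {v : V} (hv : v ≠ S.root) :
    S.T.dist S.root ((S.geod v S.root).getVert 1) + 1 = S.T.dist S.root v := by
  rw [S.geod_to_root, SimpleGraph.Walk.getVert_reverse]
  have h1 := S.root_geod_length_pos hv
  have h4 : (S.geod S.root v).length = S.T.dist S.root v := S.geod_length _ _
  rw [S.dist_getVert_geod (by omega)]
  omega

lemma parent_adj {v : V} (hv : v ≠ S.root) :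
    S.T.Adj v ((S.geod v S.root).getVert 1) := S.geod_adj_one hv

lemma eV_not_isDiag {v : V} (hv : v ≠ S.root) : ¬ (S.eV v).IsDiag := by
  rw [Setup.eV, Sym2.mk_isDiag_iff]
  exact (S.parent_adj hv).ne

lemma mem_eV_self (v : V) : v ∈ S.eV v := by
  rw [Setup.eV]; exact Sym2.mem_mk_left _ _

lemma mem_eV_iff {v x : V} : x ∈ S.eV v ↔ x = v ∨ x = (S.geod v S.root).getVert 1 := by
  rw [Setup.eV]; exact Sym2.mem_iff

lemma parent_mem_eV (v : V) : (S.geod v S.root).getVert 1 ∈ S.eV v := by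
  rw [Setup.eV]; exact Sym2.mem_mk_right _ _

lemma eV_inj {v v' : V} (hv : v ≠ S.root) (hv' : v' ≠ S.root) (h : S.eV v = S.eV v') :
    v = v' := by
  rw [Setup.eV, Setup.eV] at h
  rcases Sym2.eq_iff.mp h with ⟨h1, _⟩ | ⟨h1, h2⟩
  · exact h1
  · exfalso
    have d1 := S.parent_dist hv
    have d2 := S.parent_dist hv'
    rw [h2] at d1
    rw [← h1] at d2
    omega

noncomputable def mu (w : V) : ℕ := (Finset.univ.filter (fun u => S.vlt u w)).card

lemma mu_lt_of_vlt {a b : V} (h : S.vlt a b) : S.mu a < S.mu b := by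
  apply Finset.card_lt_card
  rw [Finset.ssubset_def]
  constructor
  · intro u hu
    simp only [Finset.mem_filter, Finset.mem_univ, true_and] at hu ⊢
    obtain ⟨hu1, hu2⟩ := hu
    refine ⟨S.vle_trans hu1 h.1, fun hub => ?_⟩
    subst hub
    exact h.2 (S.vle_antisymm h.1 hu1)
  · intro hsub
    have ha : a ∈ Finset.univ.filter (fun u => S.vlt u b) := by
      simp only [Finset.mem_filter, Finset.mem_univ, true_and]; exact h
    have := hsub ha
    simp only [Finset.mem_filter, Finset.mem_univ, true_and] at this
    exact this.2 rfl

lemma mem_diag_iff {x v : V} : x ∈ Sym2.diag v ↔ x = v := by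
  simp [Sym2.diag, Sym2.mem_iff]

lemma self_mem_diag (v : V) : v ∈ Sym2.diag v := mem_diag_iff.mpr rfl

lemma cell_disj {n : ℕ} {c : Finset (Sym2 V)} (hc : S.IsCell n c) {s t : Sym2 V}
    (hs : s ∈ c) (ht : t ∈ c) (hne : s ≠ t) {x : V} (hxs : x ∈ s) : x ∉ t :=
  hc.2.2 s hs t ht hne x hxs

lemma unb_ne_root {c : Finset (Sym2 V)} {v : V} (h : S.Unblocked c v) : v ≠ S.root :=
  fun hv => h.2 (Or.inl hv)

lemma unb_disj {c : Finset (Sym2 V)} {v : V} (h : S.Unblocked c v) :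
    ∀ s ∈ c, s ≠ Sym2.diag v → ∀ x ∈ S.eV v, x ∉ s :=
  fun s hs hne x hx hxs => h.2 (Or.inr ⟨s, hs, hne, x, hx, hxs⟩)

lemma unb_mk {c : Finset (Sym2 V)} {v : V} (h1 : Sym2.diag v ∈ c) (h2 : v ≠ S.root)
    (h3 : ∀ s ∈ c, s ≠ Sym2.diag v → ∀ x ∈ S.eV v, x ∉ s) : S.Unblocked c v :=
  ⟨h1, fun hb => by
    rcases hb with h | ⟨s, hs, hne, x, hx, hxs⟩
    · exact h2 h
    · exact h3 s hs hne x hx hxs⟩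

lemma diag_notMem_of_mem {n : ℕ} {c : Finset (Sym2 V)} (hc : S.IsCell n c) {f : Sym2 V}
    (hf : f ∈ c) (hnd : ¬ f.IsDiag) {w : V} (hw : w ∈ f) : Sym2.diag w ∉ c := by
  intro hd
  have hne : f ≠ Sym2.diag w := fun h => hnd (h ▸ Sym2.diag_isDiag w)
  exact S.cell_disj hc hf hd hne hw (self_mem_diag w)

lemma vertexify_isCell {n : ℕ} {c : Finset (Sym2 V)} (hc : S.IsCell n c) {f : Sym2 V}
    (hf : f ∈ c) (hnd : ¬ f.IsDiag) {w : V} (hw : w ∈ f) :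
    S.IsCell n (insert (Sym2.diag w) (c.erase f)) := by
  have hdnm := S.diag_notMem_of_mem hc hf hnd hw
  refine ⟨?_, ?_, ?_⟩
  · rw [Finset.card_insert_of_notMem (fun h => hdnm (Finset.mem_of_mem_erase h)),
      Finset.card_erase_of_mem hf, hc.1]
    have hn : 1 ≤ n := by
      rw [← hc.1]
      exact Finset.card_pos.mpr ⟨f, hf⟩
    omega
  · intro s hs
    rcases Finset.mem_insert.1 hs with h | h
    · exact Or.inl (h ▸ Sym2.diag_isDiag w)
    · exact hc.2.1 s (Finset.mem_of_mem_erase h)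
  · intro s hs t ht hne x hxs
    rcases Finset.mem_insert.1 hs with h | h <;> rcases Finset.mem_insert.1 ht with h' | h'
    · exact absurd (h.trans h'.symm) hne
    · have hxw : x = w := mem_diag_iff.1 (h ▸ hxs)
      subst hxw
      exact S.cell_disj hc hf (Finset.mem_of_mem_erase h')
        (fun hh => (Finset.mem_erase.1 h').1 hh.symm) hw
    · intro hxt
      have hxw : x = w := mem_diag_iff.1 (h' ▸ hxt)
      subst hxw
      exact S.cell_disj hc hf (Finset.mem_of_mem_erase h)
        (fun hh => (Finset.mem_erase.1 h).1 hh.symm) hw hxs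
    · exact hc.2.2 s (Finset.mem_of_mem_erase h) t (Finset.mem_of_mem_erase h') hne x hxs

lemma vertexify_dim {c : Finset (Sym2 V)} {f : Sym2 V} (hf : f ∈ c) (hnd : ¬ f.IsDiag)
    {w : V} :
    Setup.dim c = Setup.dim (insert (Sym2.diag w) (c.erase f)) + 1 := by
  classical
  unfold Setup.dim
  rw [Finset.filter_insert, if_neg (by simp [Sym2.diag_isDiag]), Finset.filter_erase,
    Finset.card_erase_of_mem (Finset.mem_filter.mpr ⟨hf, hnd⟩)]
  have h1 : 1 ≤ (Finset.filter (fun s => ¬ s.IsDiag) c).card :=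
    Finset.card_pos.mpr ⟨f, Finset.mem_filter.mpr ⟨hf, hnd⟩⟩
  omega

lemma redFrom_recover {n : ℕ} {c : Finset (Sym2 V)} (hc : S.IsCell n c) {v : V}
    (h1 : Sym2.diag v ∈ c) (hv : v ≠ S.root) :
    S.eV v ∉ c ∧ (S.redFrom c v).erase (S.eV v) = c.erase (Sym2.diag v) := by
  have hnd := S.eV_not_isDiag hv
  have hev : S.eV v ∉ c := by
    intro h
    exact S.cell_disj hc h h1 (fun hh => hnd (hh ▸ Sym2.diag_isDiag v))
      (S.mem_eV_self v) (self_mem_diag v)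
  refine ⟨hev, ?_⟩
  rw [Setup.redFrom, Finset.erase_insert (fun h => hev (Finset.mem_of_mem_erase h))]

lemma keyI (n : ℕ) : ∀ (k : ℕ) (c : Finset (Sym2 V)) (w : V), S.mu w = k →
    S.IsCell n c → S.Redundant n c → w ≠ S.root → S.eV w ∈ c →
    (∀ s ∈ c, s ≠ S.eV w → ∀ x ∈ S.eV w, x ∉ s) →
    (∀ u : V, S.Unblocked (insert (Sym2.diag w) (c.erase (S.eV w))) u → S.vle w u) →
    False := by
  intro k
  induction k using Nat.strong_induction_on with
  | _ k ih =>
  intro c w hmu hc hred hwroot hfc hdisj hmin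
  have hndf : ¬ (S.eV w).IsDiag := S.eV_not_isDiag hwroot
  have hwf : w ∈ S.eV w := S.mem_eV_self w
  set f := S.eV w with hfdef
  set b := insert (Sym2.diag w) (c.erase f) with hbdef
  have hdnm : Sym2.diag w ∉ c := S.diag_notMem_of_mem hc hfc hndf hwf
  have hbcell : S.IsCell n b := S.vertexify_isCell hc hfc hndf hwf
  have hdim : Setup.dim c = Setup.dim b + 1 := vertexify_dim hfc hndf
  have hwb : S.Unblocked b w := by
    refine S.unb_mk (Finset.mem_insert_self _ _) hwroot ?_
    intro s hs hne x hx hxs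
    rcases Finset.mem_insert.1 hs with h | h
    · exact absurd h hne
    · exact hdisj s (Finset.mem_of_mem_erase h) (Finset.mem_erase.1 h).1 x hx hxs
  have hredb : S.PrincipalRedOf b c := by
    refine ⟨w, hwb, hmin, ?_⟩
    show c = S.redFrom b w
    rw [Setup.redFrom, hbdef,
      Finset.erase_insert (fun h => hdnm (Finset.mem_of_mem_erase h)),
      Finset.insert_erase hfc]
  have hnotredb : ¬ S.RedundantAux n (Setup.dim b) b := by
    intro hrb
    have hthis := hred
    rw [Setup.Redundant, hdim] at hthis
    rw [Setup.RedundantAux] at hthis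
    exact hthis.2 ⟨b, hbcell, rfl, hrb, hredb⟩
  cases hdimb : Setup.dim b with
  | zero =>
    apply hnotredb
    rw [hdimb, Setup.RedundantAux]
    exact ⟨w, hwb⟩
  | succ j =>
    rw [hdimb, Setup.RedundantAux] at hnotredb
    have hex : ∃ c₀, S.IsCell n c₀ ∧ Setup.dim c₀ = j ∧ S.RedundantAux n j c₀ ∧
        S.PrincipalRedOf c₀ b := by
      by_contra hcon
      exact hnotredb ⟨⟨w, hwb⟩, hcon⟩
    obtain ⟨a₁, ha₁cell, _, _, w₁, hw₁unb, hw₁min, hbeq⟩ := hex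
    set f₁ := S.eV w₁ with hf₁def
    have hw₁root : w₁ ≠ S.root := S.unb_ne_root hw₁unb
    have hndf₁ : ¬ f₁.IsDiag := S.eV_not_isDiag hw₁root
    have hw₁f₁ : w₁ ∈ f₁ := S.mem_eV_self w₁
    have hdw₁a₁ : Sym2.diag w₁ ∈ a₁ := hw₁unb.1
    have hf₁nd : f₁ ≠ Sym2.diag w₁ := fun h => hndf₁ (h ▸ Sym2.diag_isDiag w₁)
    have hf₁a₁ : f₁ ∉ a₁ := fun h =>
      S.cell_disj ha₁cell h hdw₁a₁ hf₁nd hw₁f₁ (self_mem_diag w₁)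
    have hf₁b : f₁ ∈ b := by
      rw [hbeq, Setup.redFrom]; exact Finset.mem_insert_self _ _
    have hberase : b.erase f₁ = a₁.erase (Sym2.diag w₁) := by
      rw [hbeq, Setup.redFrom,
        Finset.erase_insert (fun h => hf₁a₁ (Finset.mem_of_mem_erase h))]
    have ha₁eq : a₁ = insert (Sym2.diag w₁) (b.erase f₁) := by
      rw [hberase, Finset.insert_erase hdw₁a₁]
    have hfb : f ∉ b := by
      rw [hbdef]
      intro h
      rcases Finset.mem_insert.1 h with h | h
      · exact hndf (h ▸ Sym2.diag_isDiag w)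
      · exact (Finset.mem_erase.1 h).1 rfl
    have hff₁ : f₁ ≠ f := fun h => hfb (h ▸ hf₁b)
    have hf₁c : f₁ ∈ c := by
      have h2 := hf₁b
      rw [hbdef] at h2
      rcases Finset.mem_insert.1 h2 with h | h
      · exact absurd (h ▸ Sym2.diag_isDiag w) hndf₁
      · exact Finset.mem_of_mem_erase h
    have hw₁notf : w₁ ∉ f := fun hh => (hdisj f₁ hf₁c hff₁ w₁ hh) hw₁f₁
    have hw₁w : w₁ ≠ w := fun h => hw₁notf (h ▸ hwf)
    have hdw₁c : Sym2.diag w₁ ∉ c := S.diag_notMem_of_mem hc hf₁c hndf₁ hw₁f₁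
    have hdgwf₁ : Sym2.diag w ≠ f₁ := fun h => hndf₁ (h ▸ Sym2.diag_isDiag w)
    have hdiagw_b : Sym2.diag w ∈ b := Finset.mem_insert_self _ _
    have hdiagw_a₁ : Sym2.diag w ∈ a₁ := by
      rw [ha₁eq]
      exact Finset.mem_insert_of_mem (Finset.mem_erase.2 ⟨hdgwf₁, hdiagw_b⟩)
    have hw₁disj := S.unb_disj hw₁unb
    have hwa₁ : S.Unblocked a₁ w := by
      refine S.unb_mk hdiagw_a₁ hwroot ?_
      intro s hs hne x hx hxs
      rw [ha₁eq] at hs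
      rcases Finset.mem_insert.1 hs with h | h
      · have hxw₁ : x = w₁ := mem_diag_iff.1 (h ▸ hxs)
        subst hxw₁
        exact hw₁notf hx
      · obtain ⟨hsf₁, hsb⟩ := Finset.mem_erase.1 h
        rw [hbdef] at hsb
        rcases Finset.mem_insert.1 hsb with h2 | h2
        · exact hne h2
        · exact hdisj s (Finset.mem_of_mem_erase h2) (Finset.mem_erase.1 h2).1 x hx hxs
    have hvlt₁ : S.vlt w₁ w := ⟨hw₁min w hwa₁, hw₁w⟩
    have hdisj₁ : ∀ s ∈ c, s ≠ f₁ → ∀ x ∈ f₁, x ∉ s := by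
      intro s hs hne x hx hxs
      by_cases hsf : s = f
      · subst hsf
        exact (hdisj f₁ hf₁c hff₁ x hxs) hx
      · have hsb : s ∈ b := by
          rw [hbdef]
          exact Finset.mem_insert_of_mem (Finset.mem_erase.2 ⟨hsf, hs⟩)
        have hsa : s ∈ a₁ := by
          rw [ha₁eq]
          exact Finset.mem_insert_of_mem (Finset.mem_erase.2 ⟨hne, hsb⟩)
        have hsnd : s ≠ Sym2.diag w₁ := fun h => hdw₁c (h ▸ hs)
        exact hw₁disj s hsa hsnd x hx hxs
    have hb₁min : ∀ u : V, S.Unblocked (insert (Sym2.diag w₁) (c.erase f₁)) u →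
        S.vle w₁ u := by
      intro u hu
      by_cases huw₁ : u = w₁
      · subst huw₁; exact S.vle_refl u
      have hdu : Sym2.diag u ∈ c := by
        rcases Finset.mem_insert.1 hu.1 with h | h
        · exact absurd (Sym2.diag_injective h) huw₁
        · exact Finset.mem_of_mem_erase h
      have hduf₁ : Sym2.diag u ≠ f₁ := fun h => hndf₁ (h ▸ Sym2.diag_isDiag u)
      have hduf : Sym2.diag u ≠ f := fun h => hndf (h ▸ Sym2.diag_isDiag u)
      have hdua₁ : Sym2.diag u ∈ a₁ := by
        rw [ha₁eq]
        have hub : Sym2.diag u ∈ b := by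
          rw [hbdef]
          exact Finset.mem_insert_of_mem (Finset.mem_erase.2 ⟨hduf, hdu⟩)
        exact Finset.mem_insert_of_mem (Finset.mem_erase.2 ⟨hduf₁, hub⟩)
      have huroot := S.unb_ne_root hu
      have hudisj := S.unb_disj hu
      have hfinb₁ : f ∈ insert (Sym2.diag w₁) (c.erase f₁) :=
        Finset.mem_insert_of_mem (Finset.mem_erase.2 ⟨Ne.symm hff₁, hfc⟩)
      have hwnotin : w ∉ S.eV u := fun h => (hudisj f hfinb₁ (Ne.symm hduf) w h) hwf
      refine hw₁min u (S.unb_mk hdua₁ huroot ?_)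
      intro s hs hne x hx hxs
      rw [ha₁eq] at hs
      rcases Finset.mem_insert.1 hs with h | h
      · subst h
        exact hudisj _ (Finset.mem_insert_self _ _) hne x hx hxs
      · obtain ⟨hsnf₁, hsb⟩ := Finset.mem_erase.1 h
        rw [hbdef] at hsb
        rcases Finset.mem_insert.1 hsb with h2 | h2
        · subst h2
          have hxw : x = w := mem_diag_iff.1 hxs
          subst hxw
          exact hwnotin hx
        · obtain ⟨hsnf, hsc⟩ := Finset.mem_erase.1 h2
          have hsmem : s ∈ insert (Sym2.diag w₁) (c.erase f₁) :=
            Finset.mem_insert_of_mem (Finset.mem_erase.2 ⟨hsnf₁, hsc⟩)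
          exact hudisj s hsmem hne x hx hxs
    exact ih (S.mu w₁) (by rw [← hmu]; exact S.mu_lt_of_vlt hvlt₁) c w₁ rfl hc hred
      hw₁root hf₁c hdisj₁ hb₁min


lemma main_case {n : ℕ} {c c' : Finset (Sym2 V)} {v v' : V}
    (hc : S.IsCell n c) (hc' : S.IsCell n c')
    (hrc : S.Redundant n c)
    (hvu : S.Unblocked c v) (hvmin : ∀ u, S.Unblocked c u → S.vle v u)
    (hv'u : S.Unblocked c' v') (hv'min : ∀ u, S.Unblocked c' u → S.vle v' u)
    (hd : S.redFrom c v = S.redFrom c' v')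
    (hvv' : v ≠ v') (hee' : S.eV v ≠ S.eV v') (hle : S.vle v' v) : False := by
  have hvroot := S.unb_ne_root hvu
  have hv'root := S.unb_ne_root hv'u
  have hdvc : Sym2.diag v ∈ c := hvu.1
  have hdv'c' : Sym2.diag v' ∈ c' := hv'u.1
  obtain ⟨hevc, hde⟩ := S.redFrom_recover hc hdvc hvroot
  obtain ⟨hev'c', hde'⟩ := S.redFrom_recover hc' hdv'c' hv'root
  have hndE : ¬ (S.eV v).IsDiag := S.eV_not_isDiag hvroot
  have hndE' : ¬ (S.eV v').IsDiag := S.eV_not_isDiag hv'root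
  have hee : S.eV v ∈ S.redFrom c v := Finset.mem_insert_self _ _
  have he'e : S.eV v' ∈ S.redFrom c' v' := Finset.mem_insert_self _ _
  have he'c : S.eV v' ∈ c := by
    have h1 : S.eV v' ∈ S.redFrom c v := by rw [hd]; exact he'e
    have h2 : S.eV v' ∈ (S.redFrom c v).erase (S.eV v) :=
      Finset.mem_erase.2 ⟨Ne.symm hee', h1⟩
    rw [hde] at h2
    exact Finset.mem_of_mem_erase h2
  have hec' : S.eV v ∈ c' := by
    have h1 : S.eV v ∈ S.redFrom c' v' := by rw [← hd]; exact hee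
    have h2 : S.eV v ∈ (S.redFrom c' v').erase (S.eV v') :=
      Finset.mem_erase.2 ⟨hee', h1⟩
    rw [hde'] at h2
    exact Finset.mem_of_mem_erase h2
  have hdisj' := S.unb_disj hv'u
  have heNdv' : S.eV v ≠ Sym2.diag v' := fun h => hndE (h ▸ Sym2.diag_isDiag v')
  have he'Ndv : S.eV v' ≠ Sym2.diag v := fun h => hndE' (h ▸ Sym2.diag_isDiag v)
  have he'_disj_e : ∀ x ∈ S.eV v', x ∉ S.eV v := fun x hx =>
    hdisj' (S.eV v) hec' heNdv' x hx
  have hv_not_e' : v ∉ S.eV v' := fun h => he'_disj_e v h (S.mem_eV_self v)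
  have hdv'c : Sym2.diag v' ∉ c := S.diag_notMem_of_mem hc he'c hndE' (S.mem_eV_self v')
  have hdisjc : ∀ s ∈ c, s ≠ S.eV v' → ∀ x ∈ S.eV v', x ∉ s := by
    intro s hs hne x hx hxs
    by_cases hsv : s = Sym2.diag v
    · subst hsv
      have hxv : x = v := mem_diag_iff.1 hxs
      subst hxv
      exact hv_not_e' hx
    · have h1 : s ∈ (S.redFrom c v).erase (S.eV v) := by
        rw [hde]; exact Finset.mem_erase.2 ⟨hsv, hs⟩
      have h2 : s ∈ S.redFrom c' v' := by
        rw [← hd]; exact Finset.mem_of_mem_erase h1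
      have h3 : s ∈ c'.erase (Sym2.diag v') := by
        rw [← hde']; exact Finset.mem_erase.2 ⟨hne, h2⟩
      exact hdisj' s (Finset.mem_of_mem_erase h3) (Finset.mem_erase.1 h3).1 x hx hxs
  have hmin : ∀ u : V, S.Unblocked (insert (Sym2.diag v') (c.erase (S.eV v'))) u →
      S.vle v' u := by
    intro u hu
    by_cases huv' : u = v'
    · subst huv'; exact S.vle_refl u
    by_cases huv : u = v
    · subst huv; exact hle
    have hu_root := S.unb_ne_root hu
    have hud := S.unb_disj hu
    have hduE : Sym2.diag u ≠ S.eV v := fun h => hndE (h ▸ Sym2.diag_isDiag u)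
    have hduE' : Sym2.diag u ≠ S.eV v' := fun h => hndE' (h ▸ Sym2.diag_isDiag u)
    have hduc : Sym2.diag u ∈ c := by
      rcases Finset.mem_insert.1 hu.1 with h | h
      · exact absurd (Sym2.diag_injective h) huv'
      · exact Finset.mem_of_mem_erase h
    have hduc' : Sym2.diag u ∈ c' := by
      have h1 : Sym2.diag u ∈ c.erase (Sym2.diag v) :=
        Finset.mem_erase.2 ⟨fun h => huv (Sym2.diag_injective h), hduc⟩
      rw [← hde] at h1
      have h2 : Sym2.diag u ∈ S.redFrom c' v' := by
        rw [← hd]; exact Finset.mem_of_mem_erase h1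
      have h3 : Sym2.diag u ∈ c'.erase (Sym2.diag v') := by
        rw [← hde']; exact Finset.mem_erase.2 ⟨hduE', h2⟩
      exact Finset.mem_of_mem_erase h3
    by_cases hUc : S.Unblocked c u
    · exact S.vle_trans hle (hvmin u hUc)
    by_cases hUc' : S.Unblocked c' u
    · exact hv'min u hUc'
    exfalso
    have hb1 : S.Blocked c u := by
      by_contra hb; exact hUc ⟨hduc, hb⟩
    have hb2 : S.Blocked c' u := by
      by_contra hb; exact hUc' ⟨hduc', hb⟩
    have hv'_not : v' ∉ S.eV u := fun h =>
      (hud (Sym2.diag v') (Finset.mem_insert_self _ _)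
        (fun hh => huv' (Sym2.diag_injective hh).symm) v' h) (self_mem_diag v')
    have hdvmem : Sym2.diag v ∈ insert (Sym2.diag v') (c.erase (S.eV v')) :=
      Finset.mem_insert_of_mem (Finset.mem_erase.2 ⟨Ne.symm he'Ndv, hdvc⟩)
    have hv_not : v ∉ S.eV u := fun h =>
      (hud (Sym2.diag v) hdvmem (fun hh => huv (Sym2.diag_injective hh).symm) v h)
        (self_mem_diag v)
    rcases hb1 with h | ⟨s, hs, hne, x, hx, hxs⟩
    · exact hu_root h
    have hse' : s = S.eV v' := by
      by_contra hsne
      have hmem : s ∈ insert (Sym2.diag v') (c.erase (S.eV v')) :=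
        Finset.mem_insert_of_mem (Finset.mem_erase.2 ⟨hsne, hs⟩)
      exact (hud s hmem hne x hx) hxs
    subst hse'
    have hune' : u ∉ S.eV v' := S.cell_disj hc hduc he'c hduE' (self_mem_diag u)
    have hxu : x ≠ u := fun h => hune' (h ▸ hxs)
    have hxpv' : x = (S.geod v' S.root).getVert 1 := by
      rcases S.mem_eV_iff.1 hxs with h | h
      · exact absurd (h ▸ hx) hv'_not
      · exact h
    have hxpu : x = (S.geod u S.root).getVert 1 := by
      rcases S.mem_eV_iff.1 hx with h | h
      · exact absurd h hxu
      · exact h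
    rcases hb2 with h | ⟨s', hs', hne', y, hy, hys⟩
    · exact hu_root h
    have hs'e : s' = S.eV v := by
      by_contra hsne
      by_cases hdv'case : s' = Sym2.diag v'
      · subst hdv'case
        exact hv'_not (mem_diag_iff.1 hys ▸ hy)
      · have h1 : s' ∈ c'.erase (Sym2.diag v') := Finset.mem_erase.2 ⟨hdv'case, hs'⟩
        rw [← hde'] at h1
        have h2 : s' ∈ S.redFrom c v := by rw [hd]; exact Finset.mem_of_mem_erase h1
        have h3 : s' ∈ c.erase (Sym2.diag v) := by
          rw [← hde]; exact Finset.mem_erase.2 ⟨hsne, h2⟩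
        have h4 : s' ∈ insert (Sym2.diag v') (c.erase (S.eV v')) := by
          refine Finset.mem_insert_of_mem
            (Finset.mem_erase.2 ⟨?_, Finset.mem_of_mem_erase h3⟩)
          intro hh
          exact hev'c' (hh ▸ hs')
        exact (hud s' h4 hne' y hy) hys
    subst hs'e
    have hune : u ∉ S.eV v := S.cell_disj hc' hduc' hec' hduE (self_mem_diag u)
    have hyu : y ≠ u := fun h => hune (h ▸ hys)
    have hypv : y = (S.geod v S.root).getVert 1 := by
      rcases S.mem_eV_iff.1 hys with h | h
      · exact absurd (h ▸ hy) hv_not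
      · exact h
    have hypu : y = (S.geod u S.root).getVert 1 := by
      rcases S.mem_eV_iff.1 hy with h | h
      · exact absurd h hyu
      · exact h
    have hxy : x = y := by rw [hxpu, hypu]
    have hxe : x ∈ S.eV v := by rw [hxy, hypv]; exact S.parent_mem_eV v
    exact (he'_disj_e x hxs) hxe
  exact S.keyI n (S.mu v') c v' rfl hc hrc hv'root he'c hdisjc hmin

end Setup

/-- The discrete vector field `W` is injective: two redundant cells with the same
principal elementary reduction coincide. -/
theorem stmt6 {V : Type} [Fintype V] [DecidableEq V] (S : Setup V) (n : ℕ) (hn : 1 ≤ n) (hsub : S.SuffSubdiv n)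
    (c c' d : Finset (Sym2 V)) (hc : S.IsCell n c) (hc' : S.IsCell n c')
    (hrc : S.Redundant n c) (hrc' : S.Redundant n c')
    (h1 : S.PrincipalRedOf c d) (h2 : S.PrincipalRedOf c' d) : c = c' := by
  obtain ⟨v, hvu, hvmin, hdc⟩ := h1
  obtain ⟨v', hv'u, hv'min, hdc'⟩ := h2
  have hd : S.redFrom c v = S.redFrom c' v' := hdc.symm.trans hdc'
  by_cases hvv' : v = v'
  · subst hvv'
    obtain ⟨_, hde⟩ := S.redFrom_recover hc hvu.1 (S.unb_ne_root hvu)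
    obtain ⟨_, hde'⟩ := S.redFrom_recover hc' hv'u.1 (S.unb_ne_root hv'u)
    have h2 : c.erase (Sym2.diag v) = c'.erase (Sym2.diag v) := by
      rw [← hde, ← hde', hd]
    have h3 := congrArg (insert (Sym2.diag v)) h2
    rwa [Finset.insert_erase hvu.1, Finset.insert_erase hv'u.1] at h3
  · exfalso
    by_cases hee : S.eV v = S.eV v'
    · exact hvv' (S.eV_inj (S.unb_ne_root hvu) (S.unb_ne_root hv'u) hee)
    · rcases S.vle_total v v' with h | h
      · exact S.main_case hc' hc hrc' hv'u hv'min hvu hvmin hd.symm (Ne.symm hvv')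
          (Ne.symm hee) h
      · exact S.main_case hc hc' hrc hvu hvmin hv'u hv'min hd hvv' hee h

end GraphBraid
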